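/- Let P : C^op → Pos be a slat-doctrine over a category C with finite products, whose fibres have finite meets preserved by reindexing. Then in the existential completion, Frobenius-style distribution of meet over the completion's structure holds at the level of fibres: for (A,B,β), (A,C,γ) ∈ P^ex(A), the meet (A,B,β) ∧ (A,C,γ) computed as (A,B×C, P_{⟨pr_A,pr_B⟩}(β) ∧ P_{⟨pr_A,pr_C⟩}(γ)) is preserved by reindexing: for any f : D → A in C, P^ex_f((A,B,β) ∧ (A,C,γ)) = P^ex_f(A,B,β) ∧ P^ex_f(A,C,γ) in P^ex(D) (equality up to isomorphism of the preorder). -/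

import Mathlib

open CategoryTheory CategoryTheory.Limits Opposite

universe u v

variable {C : Type u} [Category.{v} C] [HasFiniteProducts C]

/-- The fibre of a slat-doctrine `P : Cᵒᵖ ⥤ Pos` over an object `X` of `C`. -/
abbrev Fib (P : Cᵒᵖ ⥤ PartOrd) (X : C) : Type _ := (P.obj (op X) : Type _)

/-- Reindexing along `f : X ⟶ Y` (the monotone map `P f : P Y → P X`). -/
def rIdx (P : Cᵒᵖ ⥤ PartOrd) {X Y : C} (f : X ⟶ Y) (a : Fib P Y) : Fib P X :=
  (P.map f.op).hom.toFun a

/-- Objects of the fibre of a quantifier completion over `A`: triples `(A, B, α)`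
with `α ∈ P (A × B)` (the component `A` being fixed). -/
abbrev QObj (P : Cᵒᵖ ⥤ PartOrd) (A : C) : Type _ := Σ B : C, Fib P (A ⨯ B)

/-- The order of the universal completion `P^un`:
`(A,B,α) ≤ (A,C,γ)` iff there is `g : A×C ⟶ B` with `P⟨pr_A,g⟩(α) ≤ γ`. -/
def UnLe (P : Cᵒᵖ ⥤ PartOrd) {A : C} (x y : QObj P A) : Prop :=
  ∃ g : A ⨯ y.1 ⟶ x.1, rIdx P (prod.lift prod.fst g) x.2 ≤ y.2

/-- The order of the existential completion `P^ex`: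
`(A,B,α) ≤ (A,C,γ)` iff there is `f : A×B ⟶ C` with `α ≤ P⟨pr_A,f⟩(γ)`. -/
def ExLe (P : Cᵒᵖ ⥤ PartOrd) {A : C} (x y : QObj P A) : Prop :=
  ∃ f : A ⨯ x.1 ⟶ y.1, x.2 ≤ rIdx P (prod.lift prod.fst f) y.2

/-- Reindexing of the completions along `f : X ⟶ Y`: `(Y,D,δ) ↦ (X,D,P_{f×1}(δ))`. -/
noncomputable def QReindex (P : Cᵒᵖ ⥤ PartOrd) {X Y : C} (f : X ⟶ Y) (y : QObj P Y) :
    QObj P X :=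
  ⟨y.1, rIdx P (prod.map f (𝟙 y.1)) y.2⟩

/-- The binary meet in `P^ex(A)` built from fibrewise meets of `P`. -/
noncomputable def exMeet (P : Cᵒᵖ ⥤ PartOrd)
    (inf : ∀ X : C, Fib P X → Fib P X → Fib P X) {A : C} (x y : QObj P A) : QObj P A :=
  ⟨x.1 ⨯ y.1,
    inf (A ⨯ (x.1 ⨯ y.1))
      (rIdx P (prod.lift prod.fst (prod.snd ≫ prod.fst)) x.2)
      (rIdx P (prod.lift prod.fst (prod.snd ≫ prod.snd)) y.2)⟩

/-! Reindexing along `f × 1` commutes with the projections `A × (B × C) → A × B, A × C` and,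
by assumption, with fibrewise meets; so the two objects of `P^ex(D)` coincide on the nose. -/

omit [HasFiniteProducts C] in
lemma rIdx_comp (P : Cᵒᵖ ⥤ PartOrd) {X Y Z : C} (f : X ⟶ Y) (g : Y ⟶ Z) (a : Fib P Z) :
    rIdx P (f ≫ g) a = rIdx P f (rIdx P g a) := by
  simp [rIdx]

omit [HasFiniteProducts C] in
lemma rIdx_id (P : Cᵒᵖ ⥤ PartOrd) {X : C} (a : Fib P X) : rIdx P (𝟙 X) a = a := by
  simp [rIdx]

lemma exLe_refl (P : Cᵒᵖ ⥤ PartOrd) {A : C} (x : QObj P A) : ExLe P x x :=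
  ⟨prod.snd, by rw [prod.lift_fst_snd, rIdx_id]⟩

lemma rIdx_prodMap_comm_rIdx_lift (P : Cᵒᵖ ⥤ PartOrd) {D A B B' : C} (f : D ⟶ A) (p : B ⟶ B')
    (a : Fib P (A ⨯ B')) :
    rIdx P (prod.map f (𝟙 B)) (rIdx P (prod.lift prod.fst (prod.snd ≫ p)) a) =
      rIdx P (prod.lift prod.fst (prod.snd ≫ p)) (rIdx P (prod.map f (𝟙 B')) a) := by
  rw [← rIdx_comp, ← rIdx_comp]
  congr 1
  ext <;> simp

lemma qReindex_exMeet (P : Cᵒᵖ ⥤ PartOrd) (inf : ∀ X : C, Fib P X → Fib P X → Fib P X)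
    (hpres : ∀ {X Y : C} (f : X ⟶ Y) (a b : Fib P Y),
      rIdx P f (inf Y a b) = inf X (rIdx P f a) (rIdx P f b))
    {D A : C} (f : D ⟶ A) (x y : QObj P A) :
    QReindex P f (exMeet P inf x y) = exMeet P inf (QReindex P f x) (QReindex P f y) := by
  refine Sigma.ext rfl (heq_of_eq ?_)
  simp only [QReindex, exMeet, hpres, rIdx_prodMap_comm_rIdx_lift]

theorem exCompletion_reindex_preserves_meet_general (P : Cᵒᵖ ⥤ PartOrd)
    (inf : ∀ X : C, Fib P X → Fib P X → Fib P X)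
    (hpres : ∀ {X Y : C} (f : X ⟶ Y) (a b : Fib P Y),
      rIdx P f (inf Y a b) = inf X (rIdx P f a) (rIdx P f b))
    {D A : C} (f : D ⟶ A) (x y : QObj P A) :
    ExLe P (QReindex P f (exMeet P inf x y))
        (exMeet P inf (QReindex P f x) (QReindex P f y)) ∧
      ExLe P (exMeet P inf (QReindex P f x) (QReindex P f y))
        (QReindex P f (exMeet P inf x y)) := by
  rw [qReindex_exMeet P inf hpres f x y]
  exact ⟨exLe_refl P _, exLe_refl P _⟩

/-- Reindexing in the existential completion preserves the fibrewise binary meets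
(up to isomorphism in the preorder `P^ex(D)`). -/
theorem exCompletion_reindex_preserves_meet (P : Cᵒᵖ ⥤ PartOrd)
    (inf : ∀ X : C, Fib P X → Fib P X → Fib P X)
    (inf_le_left : ∀ (X : C) (a b : Fib P X), inf X a b ≤ a)
    (inf_le_right : ∀ (X : C) (a b : Fib P X), inf X a b ≤ b)
    (le_inf : ∀ (X : C) (c a b : Fib P X), c ≤ a → c ≤ b → c ≤ inf X a b)
    (hpres : ∀ {X Y : C} (f : X ⟶ Y) (a b : Fib P Y),
      rIdx P f (inf Y a b) = inf X (rIdx P f a) (rIdx P f b))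
    {D A : C} (f : D ⟶ A) (x y : QObj P A) :
    ExLe P (QReindex P f (exMeet P inf x y))
        (exMeet P inf (QReindex P f x) (QReindex P f y)) ∧
      ExLe P (exMeet P inf (QReindex P f x) (QReindex P f y))
        (QReindex P f (exMeet P inf x y)) :=
  exCompletion_reindex_preserves_meet_general P inf hpres f x y
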